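/- Vulnerability bound for nested hidden choices of decreasingly vulnerable channels: let π be a prior on a finite set X and g a gain function. Let n ≥ 1 and A₁, …, A_n be channels with input set X such that i < j implies V_g[π,A_i] ≥ V_g[π,A_j], and let p₁, …, p_{n−1} ∈ [0,1]. Then V_g[π, A₁ ⊕_{p₁} (A₂ ⊕_{p₂} ( … ⊕_{p_{n−1}} A_n)…)] ≤ V_g[π, A₁]. -/

import Mathlib

open Finset

/-- A channel with input set `X` and output set `Y`: entries are nonnegative
and each row sums to `1`. -/
def IsChannel {X Y : Type*} [Fintype Y] (C : X → Y → ℝ) : Prop :=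
  (∀ x y, 0 ≤ C x y) ∧ ∀ x, ∑ y, C x y = 1

/-- A channel with input set `X` whose output set is the finset `S` of a common
ambient type `Ω`: entries are nonnegative, each row sums to `1` over `S`, and
entries vanish outside `S`. -/
def IsChannelOn {X Ω : Type*} (S : Finset Ω) (C : X → Ω → ℝ) : Prop :=
  (∀ x y, 0 ≤ C x y) ∧ (∀ x, ∑ y ∈ S, C x y = 1) ∧ ∀ x y, y ∉ S → C x y = 0

/-- Parallel composition `C₁ ∥ C₂`. -/
def par {X Y₁ Y₂ : Type*} (C₁ : X → Y₁ → ℝ) (C₂ : X → Y₂ → ℝ) : X → Y₁ × Y₂ → ℝ :=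
  fun x y => C₁ x y.1 * C₂ x y.2

/-- Visible choice `C₁ ⊞_p C₂`, on the disjoint union of the output sets. -/
def vis {X Y₁ Y₂ : Type*} (p : ℝ) (C₁ : X → Y₁ → ℝ) (C₂ : X → Y₂ → ℝ) : X → Y₁ ⊕ Y₂ → ℝ :=
  fun x => Sum.elim (fun y => p * C₁ x y) (fun y => (1 - p) * C₂ x y)

/-- Hidden choice `C₁ ⊕_p C₂` for channels whose output sets lie in a common
ambient type (pointwise convex combination; this agrees with the case analysis
on `Y₁ ∩ Y₂`, `Y₁ \ Y₂`, `Y₂ \ Y₁` since channels vanish outside their output sets). -/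
def hid {X Ω : Type*} (p : ℝ) (C₁ C₂ : X → Ω → ℝ) : X → Ω → ℝ :=
  fun x y => p * C₁ x y + (1 - p) * C₂ x y

/-- Equality up to a permutation of the output set, `C₁ ≐ C₂`. -/
def PermEq {X Y₁ Y₂ : Type*} (C₁ : X → Y₁ → ℝ) (C₂ : X → Y₂ → ℝ) : Prop :=
  ∃ ψ : Y₁ ≃ Y₂, ∀ x y, C₁ x y = C₂ x (ψ y)

/-- Cascading `CD` of channels. -/
def cascade {X Y Z : Type*} [Fintype Y] (C : X → Y → ℝ) (D : Y → Z → ℝ) : X → Z → ℝ :=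
  fun x z => ∑ y, C x y * D y z

/-- `Refines C₁ C₂` (written `C₁ ⊑ C₂`): there is a channel `D` with `C₁D = C₂`. -/
def Refines {X Y₁ Y₂ : Type*} [Fintype Y₁] [Fintype Y₂] (C₁ : X → Y₁ → ℝ)
    (C₂ : X → Y₂ → ℝ) : Prop :=
  ∃ D : Y₁ → Y₂ → ℝ, IsChannel D ∧ cascade C₁ D = C₂

/-- Equivalence of channels: mutual refinement. -/
def EquivCh {X Y₁ Y₂ : Type*} [Fintype Y₁] [Fintype Y₂] (C₁ : X → Y₁ → ℝ)
    (C₂ : X → Y₂ → ℝ) : Prop :=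
  Refines C₁ C₂ ∧ Refines C₂ C₁

/-- A prior: a probability distribution on the finite input set `X`. -/
def IsPrior {X : Type*} [Fintype X] (π : X → ℝ) : Prop :=
  (∀ x, 0 ≤ π x) ∧ ∑ x, π x = 1

/-- A gain function `g : W × X → [0,1]`. -/
def IsGain {W X : Type*} (g : W → X → ℝ) : Prop :=
  ∀ w x, 0 ≤ g w x ∧ g w x ≤ 1

/-- Posterior g-vulnerability `V_g[π, C]`. -/
noncomputable def postV {W X Y : Type*} [Fintype W] [Nonempty W] [Fintype X] [Fintype Y]
    (π : X → ℝ) (g : W → X → ℝ) (C : X → Y → ℝ) : ℝ :=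
  ∑ y, univ.sup' univ_nonempty fun w => ∑ x, C x y * π x * g w x

/-- `rightNest A r i k` is the right-nested hidden choice
`A i ⊕_{r i} (A (i+1) ⊕_{r (i+1)} (… ⊕_{r (i+k-1)} A (i+k))…)`. -/
noncomputable def rightNest {X Ω : Type*} (A : ℕ → X → Ω → ℝ) (r : ℕ → ℝ) : ℕ → ℕ → X → Ω → ℝ
  | i, 0 => A i
  | i, k + 1 => hid (r i) (A i) (rightNest A r (i + 1) k)

/-- `leftNest A t k` is the left-nested hidden choice
`((…((A 0 ⊕_{t 0 / t 1} A 1) ⊕_{t 1 / t 2} A 2) …) ⊕_{t (k-1) / t k} A k)`. -/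
noncomputable def leftNest {X Ω : Type*} (A : ℕ → X → Ω → ℝ) (t : ℕ → ℝ) : ℕ → X → Ω → ℝ
  | 0 => A 0
  | k + 1 => hid (t k / t (k + 1)) (leftNest A t k) (A (k + 1))

/-!
Posterior vulnerability is convex in the channel: in each output column the maximum over actions
of a convex combination of linear functionals is at most the convex combination of the maxima.
Hence `V_g[π, A₁ ⊕_p R] ≤ max (V_g[π, A₁]) (V_g[π, R])`, and induction along the nesting, with
the vulnerabilities of the `Aᵢ` decreasing, bounds everything by `V_g[π, A₁]`.
-/

section HiddenChoice

variable {W X Ω : Type*} [Fintype W] [Nonempty W] [Fintype X] [Fintype Ω]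
  (π : X → ℝ) (g : W → X → ℝ)

lemma postV_hid_le {q : ℝ} (hq : q ∈ Set.Icc (0 : ℝ) 1) (C D : X → Ω → ℝ) :
    postV π g (hid q C D) ≤ q * postV π g C + (1 - q) * postV π g D := by
  obtain ⟨hq0, hq1⟩ := hq
  rw [postV, postV, postV, mul_sum, mul_sum, ← sum_add_distrib]
  refine sum_le_sum fun y _ => sup'_le _ _ fun w _ => ?_
  calc ∑ x, hid q C D x y * π x * g w x
      = q * ∑ x, C x y * π x * g w x + (1 - q) * ∑ x, D x y * π x * g w x := by
        rw [mul_sum, mul_sum, ← sum_add_distrib]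
        exact sum_congr rfl fun x _ => by simp only [hid]; ring
    _ ≤ _ := add_le_add
        (mul_le_mul_of_nonneg_left (le_sup' (fun w => ∑ x, C x y * π x * g w x) (mem_univ w)) hq0)
        (mul_le_mul_of_nonneg_left (le_sup' (fun w => ∑ x, D x y * π x * g w x) (mem_univ w))
          (sub_nonneg.mpr hq1))

lemma postV_hid_le_of_le {q : ℝ} (hq : q ∈ Set.Icc (0 : ℝ) 1) {C D : X → Ω → ℝ}
    (hDC : postV π g D ≤ postV π g C) : postV π g (hid q C D) ≤ postV π g C := by
  have hq1 : 0 ≤ 1 - q := sub_nonneg.mpr hq.2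
  calc postV π g (hid q C D) ≤ q * postV π g C + (1 - q) * postV π g D := postV_hid_le π g hq C D
    _ ≤ q * postV π g C + (1 - q) * postV π g C := by gcongr
    _ = postV π g C := by ring

lemma postV_rightNest_le {A : ℕ → X → Ω → ℝ} {p : ℕ → ℝ} (hp : ∀ i, p i ∈ Set.Icc (0 : ℝ) 1)
    (k i : ℕ) (hmono : ∀ j, i ≤ j → j < i + k → postV π g (A (j + 1)) ≤ postV π g (A j)) :
    postV π g (rightNest A p i k) ≤ postV π g (A i) := by
  induction k generalizing i with
  | zero => exact le_rfl
  | succ k ih =>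
    have hrest : postV π g (rightNest A p (i + 1) k) ≤ postV π g (A (i + 1)) :=
      ih (i + 1) fun j hij hjk => hmono j (by omega) (by omega)
    exact postV_hid_le_of_le π g (hp i) (hrest.trans (hmono i le_rfl (by omega)))

end HiddenChoice

/-- Here `A 0, …, A (n-1)` play the role of `A₁, …, A_n`. -/
theorem vulnerability_bound_nested_hidden_choices {W X Ω : Type*}
    [Fintype W] [Nonempty W] [Fintype X] [Fintype Ω]
    (π : X → ℝ) (g : W → X → ℝ)
    (n : ℕ)
    (A : ℕ → X → Ω → ℝ)
    (hmono : ∀ i j, i < j → j < n → postV π g (A j) ≤ postV π g (A i))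
    (p : ℕ → ℝ) (hp : ∀ i, p i ∈ Set.Icc (0:ℝ) 1) :
    postV π g (rightNest A p 0 (n - 1)) ≤ postV π g (A 0) :=
  postV_rightNest_le π g hp (n - 1) 0 fun j _ hj => hmono j (j + 1) (by omega) (by omega)
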